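/- Let Q be a finite quiver with a distinguished set of unit cycles, D a perfect matching, and D' the perfect matching obtained from D by swapping at a source i of Q \ D (replacing the arrows into i with the arrows out of i). Then for every cycle p in Q, the number of arrows of p lying in D equals the number of arrows of p lying in D'; that is, D and D' are equivalent perfect matchings. -/

import Mathlib

open Classical

/-- A quiver given by tail and head maps on an arrow type. -/
structure QuiverData (V E : Type*) where
  t : E → V
  h : E → V

variable {V E V' E' : Type*}

/-- `n_D(p)`: the number of steps of the path `p` (a list of arrows, in traversal
order) lying in the set of arrows `D`. -/
noncomputable def nD (D : Set E) (p : List E) : ℕ :=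
  p.countP (fun e => decide (e ∈ D))

/-- `p` is a composable path: the head of each step is the tail of the next. -/
def IsPath (Q : QuiverData V E) (p : List E) : Prop :=
  p.Chain' (fun a b => Q.h a = Q.t b)

/-- `p` is a nonempty oriented cycle. -/
def IsCycle (Q : QuiverData V E) (p : List E) : Prop :=
  IsPath Q p ∧ p ≠ [] ∧
    ∃ a b, p.head? = some a ∧ p.getLast? = some b ∧ Q.h b = Q.t a

/-- `D` is a perfect matching with respect to the set `U` of unit cycles:
each unit cycle contains precisely one arrow of `D`. -/
def IsPerfectMatching (U : Set (List E)) (D : Set E) : Prop :=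
  ∀ c ∈ U, nD D c = 1

/-- Abstract combinatorial model of a dimer quiver: the distinguished unit
cycles are oriented cycles, and each arrow lies in exactly two unit cycles. -/
def IsDimer (Q : QuiverData V E) (U : Set (List E)) : Prop :=
  (∀ c ∈ U, IsCycle Q c) ∧ (∀ e : E, {c ∈ U | e ∈ c}.ncard = 2)

/-- The defining relations of the dimer algebra: `p ∼ q` whenever `pa` and `qa`
are unit cycles for a common arrow `a` (here the path `pa`, "first `a`, then `p`",
is the list `a :: p`). -/
inductive DimerRel (U : Set (List E)) : List E → List E → Prop
  | base {p q : List E} {a : E} : (a :: p) ∈ U → (a :: q) ∈ U → DimerRel U p q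

/-- The congruence on paths generated by a relation `R`: the smallest equivalence
relation containing `R` and compatible with concatenation of paths.
`PathEquiv R p q` models `p = q` modulo the ideal generated by `R`. -/
inductive PathEquiv (R : List E → List E → Prop) : List E → List E → Prop
  | of {p q : List E} : R p q → PathEquiv R p q
  | refl (p : List E) : PathEquiv R p p
  | symm {p q : List E} : PathEquiv R p q → PathEquiv R q p
  | trans {p q r : List E} : PathEquiv R p q → PathEquiv R q r → PathEquiv R p r
  | mul {p q p' q' : List E} : PathEquiv R p q → PathEquiv R p' q' →
      PathEquiv R (p ++ p') (q ++ q')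

/-- Two sets of arrows are equivalent perfect matchings when they assign the same
count to every cycle. -/
def MatchingEquiv (Q : QuiverData V E) (D D' : Set E) : Prop :=
  ∀ p, IsCycle Q p → nD D p = nD D' p

/-- An arrow is nonrigid if every perfect matching containing it is equivalent to
a perfect matching not containing it. -/
def NonrigidArrow (Q : QuiverData V E) (U : Set (List E)) (e : E) : Prop :=
  ∀ D, IsPerfectMatching U D → e ∈ D →
    ∃ D', IsPerfectMatching U D' ∧ MatchingEquiv Q D D' ∧ e ∉ D'

/-- `p` is a path from `u` to `v`. -/
def PathFromTo (Q : QuiverData V E) (p : List E) (u v : V) : Prop :=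
  IsPath Q p ∧ ((p = [] ∧ u = v) ∨
    ∃ a b, p.head? = some a ∧ p.getLast? = some b ∧ Q.t a = u ∧ Q.h b = v)

/-- A perfect matching `D` is simple if `Q \ D` is strongly connected. -/
def IsSimpleMatching (Q : QuiverData V E) (U : Set (List E)) (D : Set E) : Prop :=
  IsPerfectMatching U D ∧
    ∀ u v : V, ∃ p, PathFromTo Q p u v ∧ ∀ e ∈ p, e ∉ D

/-- `ρ`, `φ` present `Q'` as obtained from `Q` by contracting the arrows `e`
with `φ e = none` to vertices. -/
def IsContractionMap (Q : QuiverData V E) (Q' : QuiverData V' E')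
    (ρ : V → V') (φ : E → Option E') : Prop :=
  (∀ e e', φ e = some e' → Q'.t e' = ρ (Q.t e) ∧ Q'.h e' = ρ (Q.h e)) ∧
  (∀ e, φ e = none → ρ (Q.t e) = ρ (Q.h e)) ∧
  Function.Surjective ρ ∧ (∀ e' : E', ∃ e, φ e = some e')

/-- Endpoints of an arrow traversed forwards (`true`) or backwards (`false`). -/
def dirEnds (Q : QuiverData V E) : E × Bool → V × V
  | (e, true) => (Q.t e, Q.h e)
  | (e, false) => (Q.h e, Q.t e)

/-- A nonempty unoriented cycle in the underlying graph of `Q`. -/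
def IsUnorientedCycle (Q : QuiverData V E) (w : List (E × Bool)) : Prop :=
  w ≠ [] ∧ w.Chain' (fun x y => (dirEnds Q x).2 = (dirEnds Q y).1) ∧
    ∃ x y, w.head? = some x ∧ w.getLast? = some y ∧
      (dirEnds Q y).2 = (dirEnds Q x).1

/-- `c'` is a cyclic rotation of `c`. -/
def IsRotation (c c' : List E) : Prop := ∃ x y, c = x ++ y ∧ c' = y ++ x

/-- A unit cycle based at the vertex `i`: a cyclic rotation of a unit cycle whose
first arrow has tail `i`. -/
def BasedUnitCycle (Q : QuiverData V E) (U : Set (List E)) (i : V)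
    (c : List E) : Prop :=
  (∃ c₀ ∈ U, IsRotation c₀ c) ∧ ∃ a, c.head? = some a ∧ Q.t a = i

/-! Along a cycle the heads of the arrows are a cyclic rotation of their tails, so a cycle
enters `i` as often as it leaves `i`. Hence swapping changes `n_D(p)` by
`#exits - #entries = 0`, provided no arrow of `D` leaves `i` for another vertex. Such an
arrow would be preceded, in a unit cycle through it, by an arrow entering `i`, which lies in
`D`, so that unit cycle would contain two arrows of `D`. -/
lemma List.countP_add_countP_eq {α : Type*} {l : List α} {P Q R S : α → Bool}
    (h : ∀ x ∈ l, (if P x then 1 else 0) + (if Q x then 1 else 0) =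
      (if R x then 1 else 0) + (if S x then 1 else 0)) :
    l.countP P + l.countP Q = l.countP R + l.countP S := by
  induction l with
  | nil => rfl
  | cons a l ih =>
    have ha := h a List.mem_cons_self
    have hl := ih fun x hx => h x (List.mem_cons_of_mem a hx)
    simp only [List.countP_cons]
    omega

lemma IsPath.map_h_cons {Q : QuiverData V E} {a : E} {q : List E} (hp : IsPath Q (a :: q)) :
    (a :: q).map Q.h = q.map Q.t ++ [Q.h ((a :: q).getLast (List.cons_ne_nil a q))] := by
  induction q generalizing a with
  | nil => rfl
  | cons b r ih =>
    obtain ⟨hab, hp⟩ := List.isChain_cons_cons.mp hp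
    rw [List.map_cons, ih hp, hab, List.getLast_cons_cons]
    rfl

lemma IsCycle.map_h_perm_map_t {Q : QuiverData V E} {p : List E} (hp : IsCycle Q p) :
    (p.map Q.h).Perm (p.map Q.t) := by
  obtain ⟨hpath, -, a, b, hhd, hlast, hba⟩ := hp
  obtain ⟨q, rfl⟩ := List.head?_eq_some_iff.mp hhd
  rw [List.getLast?_eq_some_getLast (List.cons_ne_nil a q), Option.some_inj] at hlast
  rw [hpath.map_h_cons, hlast, hba]
  exact List.perm_append_singleton _ _

lemma IsCycle.countP_h_eq_countP_t {Q : QuiverData V E} {p : List E} (hp : IsCycle Q p)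
    (i : V) : p.countP (fun e => Q.h e = i) = p.countP (fun e => Q.t e = i) := by
  simpa [Function.comp_def] using hp.map_h_perm_map_t.countP_eq (· = i)

lemma IsCycle.exists_h_eq_t {Q : QuiverData V E} {c : List E} (hc : IsCycle Q c) {e : E}
    (he : e ∈ c) : ∃ b ∈ c, Q.h b = Q.t e := by
  simpa using hc.map_h_perm_map_t.symm.subset (List.mem_map_of_mem he)

lemma eq_of_nD_eq_one {D : Set E} {c : List E} (hc : nD D c = 1) {a b : E}
    (ha : a ∈ c) (haD : a ∈ D) (hb : b ∈ c) (hbD : b ∈ D) : a = b := by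
  rw [nD, List.countP_eq_length_filter, List.length_eq_one_iff] at hc
  obtain ⟨x, hx⟩ := hc
  have ha' : a ∈ c.filter (fun e => decide (e ∈ D)) := List.mem_filter.2 ⟨ha, by simpa⟩
  have hb' : b ∈ c.filter (fun e => decide (e ∈ D)) := List.mem_filter.2 ⟨hb, by simpa⟩
  rw [hx, List.mem_singleton] at ha' hb'
  rw [ha', hb']

lemma IsDimer.h_eq_of_t_eq_source {Q : QuiverData V E} {U : Set (List E)}
    (hdimer : IsDimer Q U) {D : Set E} (hD : IsPerfectMatching U D) {i : V}
    (hin : ∀ a : E, Q.h a = i → a ∈ D) {e : E} (heD : e ∈ D) (hte : Q.t e = i) :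
    Q.h e = i := by
  obtain ⟨c, hcU, hec⟩ : {c ∈ U | e ∈ c}.Nonempty :=
    Set.nonempty_of_ncard_ne_zero (by rw [hdimer.2 e]; decide)
  obtain ⟨b, hbc, hhb⟩ := (hdimer.1 c hcU).exists_h_eq_t hec
  have hbe : b = e := eq_of_nD_eq_one (hD c hcU) hbc (hin b (hhb.trans hte)) hec heD
  rwa [← hbe, hhb]

theorem stmt1_general (Q : QuiverData V E) (U : Set (List E))
    (hdimer : IsDimer Q U) (D : Set E) (hD : IsPerfectMatching U D) (i : V)
    (hin : ∀ a : E, Q.h a = i → a ∈ D) :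
    MatchingEquiv Q D ((D \ {a : E | Q.h a = i}) ∪ {a : E | Q.t a = i}) := by
  intro p hp
  have hloop : ∀ e ∈ D, Q.t e = i → Q.h e = i := fun _ => hdimer.h_eq_of_t_eq_source hD hin
  have hswap : nD D p + p.countP (fun e => Q.t e = i) =
      nD ((D \ {a : E | Q.h a = i}) ∪ {a : E | Q.t a = i}) p +
        p.countP (fun e => Q.h e = i) := by
    refine List.countP_add_countP_eq fun e _ => ?_
    by_cases hh : Q.h e = i <;> by_cases ht : Q.t e = i <;> by_cases hmem : e ∈ D <;>
      simp_all
  have := hp.countP_h_eq_countP_t i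
  omega

/-- swapping a perfect matching `D` at a source `i` of `Q \ D`
(replacing the arrows into `i` by the arrows out of `i`) produces an equivalent
perfect matching: both assign the same count to every cycle of `Q`. -/
theorem stmt1 [Fintype V] [Fintype E] (Q : QuiverData V E) (U : Set (List E))
    (hdimer : IsDimer Q U) (D : Set E) (hD : IsPerfectMatching U D) (i : V)
    (hin : ∀ a : E, Q.h a = i → a ∈ D) (hout : ∃ a : E, Q.t a = i) :
    MatchingEquiv Q D ((D \ {a : E | Q.h a = i}) ∪ {a : E | Q.t a = i}) :=
  stmt1_general Q U hdimer D hD i hin
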